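/- Define gf2(b,c) := gf(2b+1, b, c, 0)|_{X=Y=1}. Then gf2(b,c) = 2^{2b+1-c} q^{b(2b+1) - c(c-1)/2} * (q^{4b+4}; q^4)_{c-2b-1} / (q^2; q^2)_{c-2b-1} for c \ge 2b+1. -/

import Mathlib

/-- The field of rational functions in the three indeterminates `X`, `Y`, `q`. -/
noncomputable abbrev MyF : Type := FractionRing (MvPolynomial (Fin 3) ℚ)

/-- The indeterminate `X`. -/
noncomputable def Xv : MyF := algebraMap (MvPolynomial (Fin 3) ℚ) MyF (MvPolynomial.X 0)
/-- The indeterminate `Y`. -/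
noncomputable def Yv : MyF := algebraMap (MvPolynomial (Fin 3) ℚ) MyF (MvPolynomial.X 1)
/-- The indeterminate `q`. -/
noncomputable def qv : MyF := algebraMap (MvPolynomial (Fin 3) ℚ) MyF (MvPolynomial.X 2)

/-- The weight of a lattice path (encoded as a list of steps, `true` = right step,
`false` = down step) starting at a given point: a right step from `(u,v)` to `(u+1,v)`
has weight `(X q^{u-2v} + Y q^{2v-u})/2`, a down step has weight `1`, and the weight
of the path is the product of the weights of its steps. -/
noncomputable def pathWeight (X Y q : MyF) : ℤ × ℤ → List Bool → MyF
  | _, [] => 1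
  | p, true :: s =>
      (X * q ^ (p.1 - 2 * p.2) + Y * q ^ (2 * p.2 - p.1)) / 2 *
        pathWeight X Y q (p.1 + 1, p.2) s
  | p, false :: s => pathWeight X Y q (p.1, p.2 - 1) s

/-- The endpoint of a lattice path (list of steps) starting at a given point. -/
def endpt : ℤ × ℤ → List Bool → ℤ × ℤ
  | p, [] => p
  | p, true :: s => endpt (p.1 + 1, p.2) s
  | p, false :: s => endpt (p.1, p.2 - 1) s

/-- `gf X Y q a b c d` is the generating function of all lattice paths from `(a,b)`
to `(c,d)` with unit steps to the right and downwards, weighted as in `pathWeight`.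
(Any such path has exactly `c-a` right steps and `b-d` down steps, hence length
`(c-a)+(b-d)`; the sum ranges over all step sequences of that length ending at
`(c,d)`.  In particular `gf X Y q a b c d = 0` when `a > c` or `b < d`.) -/
noncomputable def gf (X Y q : MyF) (a b c d : ℤ) : MyF :=
  ∑ s : Fin ((c - a) + (b - d)).toNat → Bool,
    if endpt (a, b) (List.ofFn s) = (c, d) then pathWeight X Y q (a, b) (List.ofFn s) else 0

/-- q-Pochhammer symbol `(a; q)_n = ∏_{j=0}^{n-1} (1 - a q^j)`. -/
noncomputable def qPoch (a q : MyF) (n : ℕ) : MyF :=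
  ∏ j ∈ Finset.range n, (1 - a * q ^ j)

/-! Write `c = 2b + 1 + k`. Splitting off the last step of a path gives
`gf2(b, c) = w(c-1) gf2(b, c-1) + gf(2b+1, b, c, 1)` with `w(m) = (q^m + q^{-m})/2`. Step weights
depend only on `u - 2v`, so translating paths by `(2, 1)` identifies the last term with
`gf2(b-1, c-2)`, which has the same `k` (for `b = 0` it vanishes: paths never climb). The closed
form satisfies the same recurrence, which after cancelling common factors is the identity
`1 - q^{4b+4k} = (1 + q^{4b+2k})(1 - q^{2k}) + q^{2k}(1 - q^{4b})`, and has the same initial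
values `gf2(b, 2b+1) = 1`, the only path going straight down. -/

section LatticePaths

variable (X Y q : MyF)

noncomputable def stepWeight (p : ℤ × ℤ) : MyF :=
  (X * q ^ (p.1 - 2 * p.2) + Y * q ^ (2 * p.2 - p.1)) / 2

lemma pathWeight_cons_true (p : ℤ × ℤ) (s : List Bool) :
    pathWeight X Y q p (true :: s) = stepWeight X Y q p * pathWeight X Y q (p.1 + 1, p.2) s :=
  rfl

lemma pathWeight_singleton_true (p : ℤ × ℤ) : pathWeight X Y q p [true] = stepWeight X Y q p :=
  mul_one _

lemma endpt_append (p : ℤ × ℤ) (s t : List Bool) : endpt p (s ++ t) = endpt (endpt p s) t := by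
  induction s generalizing p with
  | nil => rfl
  | cons x s ih => cases x <;> exact ih _

lemma pathWeight_append (p : ℤ × ℤ) (s t : List Bool) :
    pathWeight X Y q p (s ++ t) = pathWeight X Y q p s * pathWeight X Y q (endpt p s) t := by
  induction s generalizing p with
  | nil => simp [pathWeight, endpt]
  | cons x s ih => cases x <;> simp [pathWeight, endpt, ih, mul_assoc]

lemma fst_le_endpt_fst (p : ℤ × ℤ) (s : List Bool) : p.1 ≤ (endpt p s).1 := by
  induction s generalizing p with
  | nil => exact le_rfl
  | cons x s ih => cases x <;> [exact ih _; exact (ih (p.1 + 1, p.2)).trans' (by simp)]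

lemma endpt_snd_le_snd (p : ℤ × ℤ) (s : List Bool) : (endpt p s).2 ≤ p.2 := by
  induction s generalizing p with
  | nil => exact le_rfl
  | cons x s ih => cases x <;> [exact (ih (p.1, p.2 - 1)).trans (by simp); exact ih _]

lemma endpt_add_two_one (p : ℤ × ℤ) (s : List Bool) :
    endpt (p + (2, 1)) s = endpt p s + (2, 1) := by
  induction s generalizing p with
  | nil => rfl
  | cons x s ih =>
    cases x
    · simpa [endpt, sub_add_eq_add_sub] using ih (p.1, p.2 - 1)
    · simpa [endpt, add_right_comm] using ih (p.1 + 1, p.2)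

lemma stepWeight_add_two_one (p : ℤ × ℤ) :
    stepWeight X Y q (p + (2, 1)) = stepWeight X Y q p := by
  simp only [stepWeight, Prod.fst_add, Prod.snd_add]
  ring_nf

lemma pathWeight_add_two_one (p : ℤ × ℤ) (s : List Bool) :
    pathWeight X Y q (p + (2, 1)) s = pathWeight X Y q p s := by
  induction s generalizing p with
  | nil => rfl
  | cons x s ih =>
    cases x
    · simpa [pathWeight, sub_add_eq_add_sub] using ih (p.1, p.2 - 1)
    · rw [pathWeight_cons_true, pathWeight_cons_true, stepWeight_add_two_one]
      congr 1
      simpa [add_right_comm] using ih (p.1 + 1, p.2)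

noncomputable def pathSum (n : ℕ) (p e : ℤ × ℤ) : MyF :=
  ∑ s : Fin n → Bool, if endpt p (List.ofFn s) = e then pathWeight X Y q p (List.ofFn s) else 0

lemma gf_eq_pathSum (a b c d : ℤ) :
    gf X Y q a b c d = pathSum X Y q ((c - a) + (b - d)).toNat (a, b) (c, d) :=
  rfl

lemma pathSum_zero (p e : ℤ × ℤ) : pathSum X Y q 0 p e = if p = e then 1 else 0 := by
  simp [pathSum, endpt, pathWeight]

lemma pathSum_succ (n : ℕ) (p : ℤ × ℤ) (c d : ℤ) :
    pathSum X Y q (n + 1) p (c, d) =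
      stepWeight X Y q (c - 1, d) * pathSum X Y q n p (c - 1, d) +
        pathSum X Y q n p (c, d + 1) := by
  rw [pathSum, ← (Fin.snocEquiv fun _ => Bool).sum_comp, Fintype.sum_prod_type, Fintype.sum_bool,
    pathSum, pathSum, Finset.mul_sum]
  simp only [Fin.snocEquiv, Equiv.coe_fn_mk, List.ofFn_succ_last, Fin.snoc_castSucc, Fin.snoc_last,
    endpt_append, pathWeight_append]
  congr 1 <;> refine Finset.sum_congr rfl fun s _ => ?_
  · have hstep : ∀ E : ℤ × ℤ, (E.1 + 1, E.2) = (c, d) ↔ E = (c - 1, d) := by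
      intro E; simp only [Prod.ext_iff]; omega
    simp only [endpt, pathWeight_singleton_true, hstep]
    split_ifs with h
    · rw [h, mul_comm]
    · rw [mul_zero]
  · have hstep : ∀ E : ℤ × ℤ, (E.1, E.2 - 1) = (c, d) ↔ E = (c, d + 1) := by
      intro E; simp only [Prod.ext_iff]; omega
    simp only [endpt, pathWeight, mul_one, hstep]

lemma pathSum_eq_zero_of_lt_fst (n : ℕ) {p e : ℤ × ℤ} (h : e.1 < p.1) :
    pathSum X Y q n p e = 0 :=
  Finset.sum_eq_zero fun _ _ => if_neg fun he => (fst_le_endpt_fst p _).not_gt (he ▸ h)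

lemma pathSum_eq_zero_of_snd_lt (n : ℕ) {p e : ℤ × ℤ} (h : p.2 < e.2) :
    pathSum X Y q n p e = 0 :=
  Finset.sum_eq_zero fun _ _ => if_neg fun he => (endpt_snd_le_snd p _).not_gt (he ▸ h)

lemma pathSum_add_two_one (n : ℕ) (p e : ℤ × ℤ) :
    pathSum X Y q n (p + (2, 1)) (e + (2, 1)) = pathSum X Y q n p e := by
  simp only [pathSum, endpt_add_two_one, pathWeight_add_two_one, add_left_inj]

lemma pathSum_vertical (a d : ℤ) (n : ℕ) : pathSum X Y q n (a, d + n) (a, d) = 1 := by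
  induction n generalizing d with
  | zero => simp [pathSum_zero]
  | succ n ih =>
    rw [pathSum_succ, pathSum_eq_zero_of_lt_fst _ _ _ _ (by simp), mul_zero, zero_add]
    convert ih (d + 1) using 3
    push_cast
    ring

noncomputable def gfOdd (b k : ℕ) : MyF :=
  pathSum X Y q (b + k) (2 * b + 1, b) (2 * b + 1 + k, 0)

lemma gf_eq_gfOdd (b k : ℕ) :
    gf X Y q (2 * (b : ℤ) + 1) b ((2 * b + 1 + k : ℕ) : ℤ) 0 = gfOdd X Y q b k := by
  rw [gf_eq_pathSum, gfOdd]
  push_cast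
  congr
  omega

lemma gfOdd_zero_right (b : ℕ) : gfOdd X Y q b 0 = 1 := by
  simpa [gfOdd] using pathSum_vertical X Y q (2 * b + 1) 0 b

lemma gfOdd_zero_succ (k : ℕ) :
    gfOdd X Y q 0 (k + 1) = stepWeight X Y q (k + 1, 0) * gfOdd X Y q 0 k := by
  simp only [gfOdd, zero_add]
  push_cast
  rw [pathSum_succ, pathSum_eq_zero_of_snd_lt X Y q k (e := (_, 0 + 1)) (by simp), add_zero]
  ring_nf

lemma gfOdd_succ_succ (b k : ℕ) :
    gfOdd X Y q (b + 1) (k + 1) =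
      stepWeight X Y q (2 * b + 3 + k, 0) * gfOdd X Y q (b + 1) k + gfOdd X Y q b (k + 1) := by
  simp only [gfOdd, show b + 1 + (k + 1) = b + (k + 1) + 1 by ring]
  push_cast
  rw [pathSum_succ, ← pathSum_add_two_one X Y q _ (2 * ↑b + 1, ↑b)]
  simp only [Prod.mk_add_mk]
  ring_nf

end LatticePaths

lemma qPoch_succ (a q : MyF) (n : ℕ) : qPoch a q (n + 1) = qPoch a q n * (1 - a * q ^ n) :=
  Finset.prod_range_succ _ _

lemma qPoch_succ' (a q : MyF) (n : ℕ) : qPoch a q (n + 1) = (1 - a) * qPoch (a * q) q n := by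
  simp only [qPoch, Finset.prod_range_succ', pow_zero, mul_one, mul_assoc, pow_succ']
  ring

lemma qPoch_self_pow_ne_zero {q : MyF} (hq : ¬IsOfFinOrder q) {m : ℕ} (hm : 0 < m) (n : ℕ) :
    qPoch (q ^ m) (q ^ m) n ≠ 0 := by
  refine Finset.prod_ne_zero_iff.mpr fun j _ h => hq (isOfFinOrder_iff_pow_eq_one.mpr ?_)
  refine ⟨m * (j + 1), by positivity, ?_⟩
  rw [pow_mul, pow_succ', ← sub_eq_zero, ← neg_sub, h, neg_zero]

lemma stepWeight_one_one_natCast (q : MyF) (m : ℕ) :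
    stepWeight 1 1 q (m, 0) = (q ^ m + (q ^ m)⁻¹) / 2 := by
  simp [stepWeight]

lemma choose_two_succ_succ (k : ℕ) : (k + 2).choose 2 = (k + 1).choose 2 + (k + 1) := by
  rw [Nat.choose_succ_succ', Nat.choose_one_right, add_comm]

noncomputable def gfOddClosed (q : MyF) (b k : ℕ) : MyF :=
  qPoch (q ^ (4 * b + 4)) (q ^ 4) k /
    (2 ^ k * q ^ (2 * b * k + (k + 1).choose 2) * qPoch (q ^ 2) (q ^ 2) k)

section ClosedForm

variable {q : MyF} (hq₀ : q ≠ 0) (hq : ¬IsOfFinOrder q)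
include hq₀ hq

lemma gfOddClosed_zero_succ (k : ℕ) :
    gfOddClosed q 0 (k + 1) = stepWeight 1 1 q (k + 1, 0) * gfOddClosed q 0 k := by
  obtain ⟨hD, hE⟩ : qPoch (q ^ 2) (q ^ 2) k ≠ 0 ∧ 1 - q ^ 2 * (q ^ 2) ^ k ≠ 0 :=
    mul_ne_zero_iff.mp (qPoch_succ _ _ k ▸ qPoch_self_pow_ne_zero hq two_pos (k + 1))
  rw [gfOddClosed, gfOddClosed, qPoch_succ, qPoch_succ, choose_two_succ_succ,
    ← Nat.cast_add_one, stepWeight_one_one_natCast]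
  field_simp
  ring

lemma gfOddClosed_succ_succ (b k : ℕ) :
    gfOddClosed q (b + 1) (k + 1) =
      stepWeight 1 1 q (2 * b + 3 + k, 0) * gfOddClosed q (b + 1) k + gfOddClosed q b (k + 1) := by
  obtain ⟨hD, hE⟩ : qPoch (q ^ 2) (q ^ 2) k ≠ 0 ∧ 1 - q ^ 2 * (q ^ 2) ^ k ≠ 0 :=
    mul_ne_zero_iff.mp (qPoch_succ _ _ k ▸ qPoch_self_pow_ne_zero hq two_pos (k + 1))
  rw [gfOddClosed, gfOddClosed, gfOddClosed, qPoch_succ _ _ k, qPoch_succ (q ^ 2), qPoch_succ',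
    ← pow_add, show 4 * b + 4 + 4 = 4 * (b + 1) + 4 by ring, choose_two_succ_succ,
    show (2 * b + 3 + k : ℤ) = ((2 * b + 3 + k : ℕ) : ℤ) by push_cast; ring,
    stepWeight_one_one_natCast]
  field_simp
  ring

theorem gfOdd_one_one_eq_gfOddClosed (b k : ℕ) : gfOdd 1 1 q b k = gfOddClosed q b k := by
  induction b generalizing k with
  | zero =>
    induction k with
    | zero => simp [gfOdd_zero_right, gfOddClosed, qPoch]
    | succ k ih => rw [gfOdd_zero_succ, gfOddClosed_zero_succ hq₀ hq, ih]
  | succ b ihb =>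
    induction k with
    | zero => simp [gfOdd_zero_right, gfOddClosed, qPoch]
    | succ k ih => rw [gfOdd_succ_succ, gfOddClosed_succ_succ hq₀ hq, ih, ihb]

end ClosedForm

lemma gfOddClosed_eq_zpow (q : MyF) (b k : ℕ) :
    gfOddClosed q b k =
      2 ^ (-(k : ℤ)) * q ^ (-((2 * b * k + (k + 1).choose 2 : ℕ) : ℤ)) *
        qPoch (q ^ (4 * b + 4)) (q ^ 4) k / qPoch (q ^ 2) (q ^ 2) k := by
  simp only [gfOddClosed, zpow_neg, zpow_natCast, div_eq_mul_inv, mul_inv]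
  ring

lemma mul_two_mul_add_one_sub_triangle (b k : ℕ) :
    (b : ℤ) * (2 * b + 1) -
        ((2 * b + 1 + k : ℕ) : ℤ) * (((2 * b + 1 + k : ℕ) : ℤ) - 1) / 2 =
      -((2 * b * k + (k + 1).choose 2 : ℕ) : ℤ) := by
  have hchoose : ((k + 1).choose 2 : ℤ) * 2 = (k + 1) * k := by
    exact_mod_cast (Nat.choose_one_right k ▸ Nat.add_one_mul_choose_eq k 1).symm
  have hprod : ((2 * b + 1 + k : ℕ) : ℤ) * (((2 * b + 1 + k : ℕ) : ℤ) - 1) =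
      (b * (2 * b + 1) + 2 * b * k + (k + 1).choose 2) * 2 := by
    push_cast
    linear_combination -hchoose
  rw [hprod, Int.mul_ediv_cancel _ two_ne_zero]
  push_cast
  ring

lemma qv_ne_zero : qv ≠ 0 :=
  (map_ne_zero_iff _ (IsFractionRing.injective (MvPolynomial (Fin 3) ℚ) MyF)).mpr
    (MvPolynomial.X_ne_zero _)

lemma not_isOfFinOrder_qv : ¬IsOfFinOrder qv := by
  intro hq
  obtain ⟨n, hn, h⟩ := isOfFinOrder_iff_pow_eq_one.mp hq
  rw [qv, ← map_pow, ← map_one (algebraMap (MvPolynomial (Fin 3) ℚ) MyF),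
    (IsFractionRing.injective (MvPolynomial (Fin 3) ℚ) MyF).eq_iff] at h
  simpa [hn.ne'] using congrArg MvPolynomial.constantCoeff h

/-- With `gf2(b,c) := gf(2b+1, b, c, 0)|_{X=Y=1}`, for `c ≥ 2b+1` one has
`gf2(b,c) = 2^{2b+1-c} q^{b(2b+1) - c(c-1)/2} (q^{4b+4};q⁴)_{c-2b-1} / (q²;q²)_{c-2b-1}`. -/
theorem gf_quarter_odd_eval (b c : ℕ) (hbc : 2 * b + 1 ≤ c) :
    gf 1 1 qv (2 * (b : ℤ) + 1) (b : ℤ) (c : ℤ) 0 =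
      (2 : MyF) ^ (2 * (b : ℤ) + 1 - (c : ℤ)) *
        qv ^ ((b : ℤ) * (2 * (b : ℤ) + 1) - (c : ℤ) * ((c : ℤ) - 1) / 2) *
        qPoch (qv ^ (4 * b + 4)) (qv ^ 4) (c - 2 * b - 1) /
          qPoch (qv ^ 2) (qv ^ 2) (c - 2 * b - 1) := by
  obtain ⟨k, rfl⟩ := Nat.exists_eq_add_of_le hbc
  rw [gf_eq_gfOdd, gfOdd_one_one_eq_gfOddClosed qv_ne_zero not_isOfFinOrder_qv, gfOddClosed_eq_zpow,
    show 2 * b + 1 + k - 2 * b - 1 = k by omega, mul_two_mul_add_one_sub_triangle,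
    show 2 * (b : ℤ) + 1 - ((2 * b + 1 + k : ℕ) : ℤ) = -(k : ℤ) by push_cast; ring]
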